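/- Let 𝓕 be a finite, involutively head autoreduced subset of a polynomial algebra of solvable type over a field. Then every polynomial g has a unique involutive normal form with respect to 𝓕: any two polynomials g₁, g₂ that are obtained from g by involutive reductions modulo 𝓕 and contain no term involutively reducible by 𝓕 are equal. Moreover, g lies in the involutive span of 𝓕 if and only if its involutive normal form is 0. -/

import Mathlib

/-- Polynomials in `n` variables over `R`, represented by their coefficient families
indexed by multi indices. -/
abbrev SPoly (R : Type) [CommRing R] (n : ℕ) := (Fin n → ℕ) →₀ R

/-- The leading exponent of a polynomial with respect to a term order (the maximal
element of its support; `0` for the zero polynomial). -/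
noncomputable def lexp {R : Type} [CommRing R] {n : ℕ} (ord : LinearOrder (Fin n → ℕ))
    (f : SPoly R n) : Fin n → ℕ :=
  WithBot.unbotD 0 (@Finset.max _ ord f.support)

/-- A polynomial algebra of solvable type `(P, ⋆, ≺)`: the `R`-module `R[x₁,…,xₙ]`
equipped with an associative unital multiplication `⋆` such that `r ⋆ f = r • f` for
scalars, and with respect to a term order `≺` (a monoid order) the leading exponent of
`x^μ ⋆ x^ν` is `μ + ν` and of `x^μ ⋆ r` (for `r ≠ 0`) is `μ`. -/
structure SolvMul (R : Type) [CommRing R] (n : ℕ) (ord : LinearOrder (Fin n → ℕ)) where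
  star : SPoly R n → SPoly R n → SPoly R n
  zero_min : ∀ μ : Fin n → ℕ, ord.le 0 μ
  add_compat : ∀ μ ν σ : Fin n → ℕ, ord.lt μ ν → ord.lt (μ + σ) (ν + σ)
  star_assoc : ∀ f g h : SPoly R n, star (star f g) h = star f (star g h)
  star_add : ∀ f g h : SPoly R n, star f (g + h) = star f g + star f h
  add_star : ∀ f g h : SPoly R n, star (f + g) h = star f h + star g h
  one_star : ∀ f : SPoly R n, star (Finsupp.single 0 1) f = f
  star_one : ∀ f : SPoly R n, star f (Finsupp.single 0 1) = f
  scalar_star : ∀ (r : R) (f : SPoly R n), star (Finsupp.single 0 r) f = r • f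
  mono_mono : ∀ μ ν : Fin n → ℕ,
    star (Finsupp.single μ 1) (Finsupp.single ν 1) ≠ 0 ∧
      lexp ord (star (Finsupp.single μ 1) (Finsupp.single ν 1)) = μ + ν
  mono_scalar : ∀ (μ : Fin n → ℕ) (r : R), r ≠ 0 →
    star (Finsupp.single μ 1) (Finsupp.single 0 r) ≠ 0 ∧
      lexp ord (star (Finsupp.single μ 1) (Finsupp.single 0 r)) = μ


/-- The restricted cone of `ν` determined by a set `N` of multiplicative indices. -/
def rcone {n : ℕ} (N : Set (Fin n)) (ν : Fin n → ℕ) : Set (Fin n → ℕ) :=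
  {μ | (∀ i, ν i ≤ μ i) ∧ ∀ i ∉ N, μ i = ν i}

/-- An involutive division on `ℕ^n`. -/
structure InvDiv (n : ℕ) where
  mult : Finset (Fin n → ℕ) → (Fin n → ℕ) → Set (Fin n)
  nested : ∀ (𝒩 : Finset (Fin n → ℕ)), ∀ μ ∈ 𝒩, ∀ ν ∈ 𝒩,
    (rcone (mult 𝒩 μ) μ ∩ rcone (mult 𝒩 ν) ν).Nonempty →
      rcone (mult 𝒩 μ) μ ⊆ rcone (mult 𝒩 ν) ν ∨
        rcone (mult 𝒩 ν) ν ⊆ rcone (mult 𝒩 μ) μ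
  mono : ∀ (𝒩 𝒩' : Finset (Fin n → ℕ)), 𝒩' ⊆ 𝒩 → ∀ ν ∈ 𝒩', mult 𝒩 ν ⊆ mult 𝒩' ν

/-- The set of leading exponents of a finite set of polynomials. -/
noncomputable def leadSet {R : Type} [CommRing R] {n : ℕ} (ord : LinearOrder (Fin n → ℕ))
    (ℋ : Finset (SPoly R n)) : Finset (Fin n → ℕ) :=
  ℋ.image (lexp ord)

/-- The monoid ideal of leading exponents of (the nonzero elements of) a set of
polynomials. -/
def leadExps {R : Type} [CommRing R] {n : ℕ} (ord : LinearOrder (Fin n → ℕ))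
    (I : Set (SPoly R n)) : Set (Fin n → ℕ) :=
  {μ | ∃ f ∈ I, f ≠ 0 ∧ lexp ord f = μ}

/-- `P` gives an involutive standard representation of `f` with respect to `ℋ`:
`f = Σ_{h∈ℋ} P_h ⋆ h`, every `P_h` only involves the multiplicative variables of `h`,
and `le(P_h ⋆ h) ⪯ le(f)`. -/
def IsInvRep {R : Type} [CommRing R] {n : ℕ} (ord : LinearOrder (Fin n → ℕ))
    (A : SolvMul R n ord) (L : InvDiv n) (ℋ : Finset (SPoly R n)) (f : SPoly R n)
    (P : {h // h ∈ ℋ} → SPoly R n) : Prop :=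
  f = ∑ h ∈ ℋ.attach, A.star (P h) h.1 ∧
    ∀ h : {h // h ∈ ℋ},
      (∀ μ ∈ (P h).support, ∀ i ∉ L.mult (leadSet ord ℋ) (lexp ord h.1), μ i = 0) ∧
      ord.le (lexp ord (A.star (P h) h.1)) (lexp ord f)

/-- `ℋ` is a weak involutive basis of the left ideal `I`: `ℋ ⊂ I \ {0}` and the
leading exponents of `ℋ` form a weak involutive basis of the monoid ideal of leading
exponents of `I`. -/
def WeakInvBasis {R : Type} [CommRing R] {n : ℕ} (ord : LinearOrder (Fin n → ℕ))
    (L : InvDiv n) (I : Set (SPoly R n)) (ℋ : Finset (SPoly R n)) : Prop :=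
  (↑ℋ : Set (SPoly R n)) ⊆ I ∧ (0 : SPoly R n) ∉ ℋ ∧
    (⋃ μ ∈ leadSet ord ℋ, rcone (L.mult (leadSet ord ℋ) μ) μ) = leadExps ord I

/-- `ℋ` is a strong involutive basis of `I`: a weak one whose involutive cones are
pairwise disjoint and whose elements have pairwise distinct leading exponents. -/
def StrongInvBasis {R : Type} [CommRing R] {n : ℕ} (ord : LinearOrder (Fin n → ℕ))
    (L : InvDiv n) (I : Set (SPoly R n)) (ℋ : Finset (SPoly R n)) : Prop :=
  WeakInvBasis ord L I ℋ ∧ Set.InjOn (lexp ord) (↑ℋ : Set (SPoly R n)) ∧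
    ∀ μ ∈ leadSet ord ℋ, ∀ ν ∈ leadSet ord ℋ, μ ≠ ν →
      Disjoint (rcone (L.mult (leadSet ord ℋ) μ) μ) (rcone (L.mult (leadSet ord ℋ) ν) ν)

/-- One step of involutive reduction of `g` modulo `𝓕`: a term `x^μ` of `g` with
`le(f)` an involutive divisor of `μ` for some `f ∈ 𝓕` is eliminated by subtracting
the appropriate multiple of `x^{μ - le(f)} ⋆ f`. -/
def RedStep {K : Type} [Field K] {n : ℕ} (ord : LinearOrder (Fin n → ℕ))
    (A : SolvMul K n ord) (L : InvDiv n) (𝓕 : Finset (SPoly K n))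
    (g g' : SPoly K n) : Prop :=
  ∃ f ∈ 𝓕, ∃ μ ∈ g.support,
    μ ∈ rcone (L.mult (leadSet ord 𝓕) (lexp ord f)) (lexp ord f) ∧
    g' = g - (g μ / ((A.star (Finsupp.single (μ - lexp ord f) 1) f) μ)) •
          A.star (Finsupp.single (μ - lexp ord f) 1) f

/-- `g₁` is an involutive normal form of `g` modulo `𝓕`: it is obtained from `g` by a
finite chain of involutive reductions and no term of `g₁` is involutively reducible
modulo `𝓕`. -/
def IsInvNF {K : Type} [Field K] {n : ℕ} (ord : LinearOrder (Fin n → ℕ))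
    (A : SolvMul K n ord) (L : InvDiv n) (𝓕 : Finset (SPoly K n))
    (g g₁ : SPoly K n) : Prop :=
  Relation.ReflTransGen (RedStep ord A L 𝓕) g g₁ ∧
    ∀ μ ∈ g₁.support, ∀ f ∈ 𝓕,
      μ ∉ rcone (L.mult (leadSet ord 𝓕) (lexp ord f)) (lexp ord f)

/-- The involutive span of `𝓕`: all sums `Σ_{f∈𝓕} P_f ⋆ f` with each `P_f` involving
only the multiplicative variables of `f`. -/
def PolyInvSpan {K : Type} [Field K] {n : ℕ} (ord : LinearOrder (Fin n → ℕ))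
    (A : SolvMul K n ord) (L : InvDiv n) (𝓕 : Finset (SPoly K n)) :
    Set (SPoly K n) :=
  {g | ∃ P : {h // h ∈ 𝓕} → SPoly K n,
        (∀ h : {h // h ∈ 𝓕},
          ∀ μ ∈ (P h).support, ∀ i ∉ L.mult (leadSet ord 𝓕) (lexp ord h.1), μ i = 0) ∧
        g = ∑ h ∈ 𝓕.attach, A.star (P h) h.1}

/-!
Every involutive reduction step subtracts an element of the involutive span, so two
involutive normal forms of `g` differ by an element of the span, and `g` differs from its
normal form by one. It therefore suffices that a nonzero element `Σ P_f ⋆ f` of the span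
always has an involutively reducible term. Its leading exponent is `le(P_f) + le(f)` for the
summand where this is largest; these exponents are distinct for distinct `f`, because
`le(P_f) + le(f)` lies in the involutive cone of `le(f)`, and by the nesting of involutive
cones two cones of a head autoreduced set are disjoint. So the leading exponent of the sum
lies in an involutive cone.
-/

open Finsupp

namespace SolvMul

variable {R : Type} [CommRing R] {n : ℕ} {ord : LinearOrder (Fin n → ℕ)} (A : SolvMul R n ord)

noncomputable def starLeft (g : SPoly R n) : SPoly R n →+ SPoly R n :=
  AddMonoidHom.mk' (A.star · g) fun f f' => A.add_star f f' g

noncomputable def starRight (f : SPoly R n) : SPoly R n →+ SPoly R n :=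
  AddMonoidHom.mk' (A.star f) (A.star_add f)

lemma zero_star (g : SPoly R n) : A.star 0 g = 0 :=
  map_zero (A.starLeft g)

lemma neg_star (f g : SPoly R n) : A.star (-f) g = -A.star f g :=
  map_neg (A.starLeft g) f

lemma sum_star {ι : Type*} (s : Finset ι) (f : ι → SPoly R n) (g : SPoly R n) :
    A.star (∑ i ∈ s, f i) g = ∑ i ∈ s, A.star (f i) g :=
  map_sum (A.starLeft g) f s

lemma star_sum {ι : Type*} (s : Finset ι) (f : SPoly R n) (g : ι → SPoly R n) :
    A.star f (∑ i ∈ s, g i) = ∑ i ∈ s, A.star f (g i) :=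
  map_sum (A.starRight f) g s

lemma single_eq_scalar_star (ν : Fin n → ℕ) (c : R) :
    single ν c = A.star (single 0 c) (single ν 1) := by
  rw [A.scalar_star, smul_single, smul_eq_mul, mul_one]

lemma single_star (τ : Fin n → ℕ) (c : R) (g : SPoly R n) :
    A.star (single τ c) g = c • A.star (single τ 1) g := by
  rw [A.single_eq_scalar_star τ c, A.star_assoc, ← A.scalar_star, ← A.star_assoc,
    ← A.single_eq_scalar_star]

end SolvMul

section LeadExp

variable {R : Type} [CommRing R] {n : ℕ} (ord : LinearOrder (Fin n → ℕ))

lemma lexp_eq_max' {f : SPoly R n} (hf : f.support.Nonempty) :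
    lexp ord f = @Finset.max' _ ord f.support hf := by
  rw [lexp, ← @Finset.coe_max' _ ord _ hf, WithBot.unbotD_coe]

lemma lexp_mem_support {f : SPoly R n} (hf : f ≠ 0) : lexp ord f ∈ f.support := by
  rw [lexp_eq_max' ord (support_nonempty_iff.mpr hf)]
  exact @Finset.max'_mem _ ord _ _

lemma le_lexp {f : SPoly R n} {μ : Fin n → ℕ} (hμ : μ ∈ f.support) :
    ord.le μ (lexp ord f) := by
  rw [lexp_eq_max' ord ⟨μ, hμ⟩]
  exact @Finset.le_max' _ ord _ μ hμ

def IsLeadExp (M : Fin n → ℕ) (f : SPoly R n) : Prop :=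
  f M ≠ 0 ∧ ∀ μ ∈ f.support, ord.le μ M

variable {ord}

lemma isLeadExp_lexp {f : SPoly R n} (hf : f ≠ 0) : IsLeadExp ord (lexp ord f) f :=
  ⟨mem_support_iff.mp (lexp_mem_support ord hf), fun _ hμ => le_lexp ord hμ⟩

namespace IsLeadExp

variable {M : Fin n → ℕ} {f : SPoly R n}

lemma ne_zero (h : IsLeadExp ord M f) : f ≠ 0 := by
  rintro rfl
  exact h.1 rfl

lemma lexp_eq (h : IsLeadExp ord M f) : lexp ord f = M :=
  @le_antisymm _ ord.toPartialOrder _ _ (h.2 _ (lexp_mem_support ord h.ne_zero))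
    (le_lexp ord (mem_support_iff.mpr h.1))

lemma support_lt (h : IsLeadExp ord M f) {M' : Fin n → ℕ} (hlt : ord.lt M M') :
    ∀ μ ∈ f.support, ord.lt μ M' :=
  fun μ hμ => @lt_of_le_of_lt _ ord.toPreorder _ _ _ (h.2 μ hμ) hlt

lemma smul [NoZeroDivisors R] (h : IsLeadExp ord M f) {c : R} (hc : c ≠ 0) :
    IsLeadExp ord M (c • f) :=
  ⟨by simpa using mul_ne_zero hc h.1, fun μ hμ => h.2 μ (support_smul hμ)⟩

lemma sum {ι : Type*} [DecidableEq ι] {s : Finset ι} {F : ι → SPoly R n} {i₀ : ι}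
    (hi₀ : i₀ ∈ s) (h : IsLeadExp ord M (F i₀))
    (hrest : ∀ i ∈ s, i ≠ i₀ → ∀ μ ∈ (F i).support, ord.lt μ M) :
    IsLeadExp ord M (∑ i ∈ s, F i) := by
  constructor
  · rw [Finset.sum_apply', Finset.sum_eq_single_of_mem i₀ hi₀]
    · exact h.1
    · intro i hi hne
      by_contra hM
      exact @lt_irrefl _ ord.toPreorder M (hrest i hi hne M (mem_support_iff.mpr hM))
  · intro μ hμ
    obtain ⟨i, hi, hμi⟩ := Finset.mem_biUnion.mp (support_finsetSum hμ)
    by_cases hii : i = i₀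
    · subst hii
      exact h.2 μ hμi
    · exact @le_of_lt _ ord.toPreorder _ _ (hrest i hi hii μ hμi)

end IsLeadExp

lemma isLeadExp_sum_support {p : SPoly R n} (hp : p ≠ 0) {φ : (Fin n → ℕ) → Fin n → ℕ}
    (hφ : ∀ τ σ, ord.lt τ σ → ord.lt (φ τ) (φ σ)) {G : (Fin n → ℕ) → SPoly R n}
    (hG : ∀ τ ∈ p.support, IsLeadExp ord (φ τ) (G τ)) :
    IsLeadExp ord (φ (lexp ord p)) (∑ τ ∈ p.support, G τ) := by
  classical
  refine IsLeadExp.sum (lexp_mem_support ord hp) (hG _ (lexp_mem_support ord hp)) ?_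
  intro τ hτ hne
  exact (hG τ hτ).support_lt
    (hφ _ _ (@lt_of_le_of_ne _ ord.toPartialOrder _ _ (le_lexp ord hτ) hne))

end LeadExp

section LeadExpStar

variable {R : Type} [CommRing R] {n : ℕ} {ord : LinearOrder (Fin n → ℕ)} (A : SolvMul R n ord)

lemma isLeadExp_single_one_star_single_one (μ ν : Fin n → ℕ) :
    IsLeadExp ord (μ + ν) (A.star (single μ 1) (single ν 1)) := by
  obtain ⟨hne, hlexp⟩ := A.mono_mono μ ν
  have := isLeadExp_lexp (ord := ord) hne
  rwa [hlexp] at this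

lemma isLeadExp_single_one_star_scalar (μ : Fin n → ℕ) {c : R} (hc : c ≠ 0) :
    IsLeadExp ord μ (A.star (single μ 1) (single 0 c)) := by
  obtain ⟨hne, hlexp⟩ := A.mono_scalar μ c hc
  have := isLeadExp_lexp (ord := ord) hne
  rwa [hlexp] at this

variable [NoZeroDivisors R]

lemma isLeadExp_star_single {p : SPoly R n} {σ : Fin n → ℕ} (hp : IsLeadExp ord σ p)
    (ν : Fin n → ℕ) : IsLeadExp ord (σ + ν) (A.star p (single ν 1)) := by
  obtain rfl := hp.lexp_eq
  conv_rhs => rw [← sum_single p, Finsupp.sum, A.sum_star]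
  refine isLeadExp_sum_support hp.ne_zero (φ := (· + ν)) (fun τ τ' h => A.add_compat τ τ' ν h) ?_
  intro τ hτ
  rw [A.single_star]
  exact (isLeadExp_single_one_star_single_one A τ ν).smul (mem_support_iff.mp hτ)

lemma isLeadExp_single_one_star_single (σ ν : Fin n → ℕ) {c : R} (hc : c ≠ 0) :
    IsLeadExp ord (σ + ν) (A.star (single σ 1) (single ν c)) := by
  rw [A.single_eq_scalar_star ν c, ← A.star_assoc]
  exact isLeadExp_star_single A (isLeadExp_single_one_star_scalar A σ hc) ν

lemma isLeadExp_single_one_star {f : SPoly R n} (hf : f ≠ 0) (σ : Fin n → ℕ) :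
    IsLeadExp ord (σ + lexp ord f) (A.star (single σ 1) f) := by
  conv_rhs => rw [← sum_single f, Finsupp.sum, A.star_sum]
  refine isLeadExp_sum_support hf (φ := (σ + ·)) (fun τ τ' h => ?_) fun ν hν =>
    isLeadExp_single_one_star_single A σ ν (mem_support_iff.mp hν)
  simpa only [add_comm σ] using A.add_compat τ τ' σ h

lemma isLeadExp_star {P f : SPoly R n} (hP : P ≠ 0) (hf : f ≠ 0) :
    IsLeadExp ord (lexp ord P + lexp ord f) (A.star P f) := by
  conv_rhs => rw [← sum_single P, Finsupp.sum, A.sum_star]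
  refine isLeadExp_sum_support hP (φ := (· + lexp ord f))
    (fun τ τ' h => A.add_compat τ τ' _ h) fun τ hτ => ?_
  rw [A.single_star]
  exact (isLeadExp_single_one_star A hf τ).smul (mem_support_iff.mp hτ)

end LeadExpStar

section InvolutiveSpan

variable {K : Type} [Field K] {n : ℕ} {ord : LinearOrder (Fin n → ℕ)} (A : SolvMul K n ord)
  (L : InvDiv n) (𝓕 : Finset (SPoly K n))

def invSpan : AddSubgroup (SPoly K n) where
  carrier := PolyInvSpan ord A L 𝓕
  zero_mem' := ⟨fun _ => 0, fun _ μ hμ => by simp at hμ, by simp [A.zero_star]⟩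
  add_mem' := by
    rintro g g' ⟨P, hP, rfl⟩ ⟨Q, hQ, rfl⟩
    refine ⟨P + Q, fun h μ hμ => ?_, ?_⟩
    · rcases Finset.mem_union.mp (support_add hμ) with hμ | hμ
      exacts [hP h μ hμ, hQ h μ hμ]
    · simp only [Pi.add_apply, A.add_star, Finset.sum_add_distrib]
  neg_mem' := by
    rintro g ⟨P, hP, rfl⟩
    refine ⟨-P, fun h μ hμ => hP h μ (by simpa using hμ), ?_⟩
    simp only [Pi.neg_apply, A.neg_star, Finset.sum_neg_distrib]

lemma single_star_mem_invSpan {f : SPoly K n} (hf : f ∈ 𝓕) {σ : Fin n → ℕ}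
    (hσ : ∀ i ∉ L.mult (leadSet ord 𝓕) (lexp ord f), σ i = 0) (c : K) :
    A.star (single σ c) f ∈ invSpan A L 𝓕 := by
  classical
  refine ⟨Pi.single ⟨f, hf⟩ (single σ c), fun h μ hμ i hi => ?_, ?_⟩
  · obtain rfl : h = ⟨f, hf⟩ := by
      by_contra hne
      simp [hne] at hμ
    rw [Pi.single_eq_same] at hμ
    obtain rfl := Finset.mem_singleton.mp (support_single_subset hμ)
    exact hσ i hi
  · rw [Finset.sum_eq_single_of_mem ⟨f, hf⟩ (Finset.mem_attach _ _)]
    · simp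
    · intro h _ hne
      simp [hne, A.zero_star]

variable {A L 𝓕}

lemma RedStep.sub_mem_invSpan {g g' : SPoly K n} (h : RedStep ord A L 𝓕 g g') :
    g - g' ∈ invSpan A L 𝓕 := by
  obtain ⟨f, hf, μ, -, hcone, rfl⟩ := h
  rw [sub_sub_cancel, ← A.single_star]
  refine single_star_mem_invSpan A L 𝓕 hf (fun i hi => ?_) _
  simp [hcone.2 i hi]

lemma sub_mem_invSpan_of_reflTransGen {g g' : SPoly K n}
    (h : Relation.ReflTransGen (RedStep ord A L 𝓕) g g') : g - g' ∈ invSpan A L 𝓕 := by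
  induction h with
  | refl => simp
  | tail _ hstep ih => simpa using add_mem ih hstep.sub_mem_invSpan

end InvolutiveSpan

section NormalForm

variable {K : Type} [Field K] {n : ℕ} (ord : LinearOrder (Fin n → ℕ)) (L : InvDiv n)
  (𝓕 : Finset (SPoly K n))

def invCone (f : SPoly K n) : Set (Fin n → ℕ) :=
  rcone (L.mult (leadSet ord 𝓕) (lexp ord f)) (lexp ord f)

def HeadAutoreduced : Prop :=
  ∀ f ∈ 𝓕, ∀ f' ∈ 𝓕, f ≠ f' → lexp ord f ∉ invCone ord L 𝓕 f'

def InvIrreducible (g : SPoly K n) : Prop :=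
  ∀ μ ∈ g.support, ∀ f ∈ 𝓕, μ ∉ invCone ord L 𝓕 f

variable {ord L 𝓕}

lemma lexp_mem_invCone (f : SPoly K n) : lexp ord f ∈ invCone ord L 𝓕 f :=
  ⟨fun _ => le_rfl, fun _ _ => rfl⟩

lemma add_lexp_mem_invCone {P f : SPoly K n} (hP : P ≠ 0)
    (hPmult : ∀ μ ∈ P.support, ∀ i ∉ L.mult (leadSet ord 𝓕) (lexp ord f), μ i = 0) :
    lexp ord P + lexp ord f ∈ invCone ord L 𝓕 f :=
  ⟨fun _ => Nat.le_add_left _ _,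
    fun i hi => by simp [hPmult _ (lexp_mem_support ord hP) i hi]⟩

lemma HeadAutoreduced.eq_of_mem_invCone (hauto : HeadAutoreduced ord L 𝓕) {f f' : SPoly K n}
    (hf : f ∈ 𝓕) (hf' : f' ∈ 𝓕) {μ : Fin n → ℕ} (h : μ ∈ invCone ord L 𝓕 f)
    (h' : μ ∈ invCone ord L 𝓕 f') : f = f' := by
  by_contra hne
  rcases L.nested (leadSet ord 𝓕) _ (Finset.mem_image_of_mem _ hf) _
      (Finset.mem_image_of_mem _ hf') ⟨μ, h, h'⟩ with hsub | hsub
  · exact hauto f hf f' hf' hne (hsub (lexp_mem_invCone f))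
  · exact hauto f' hf' f hf (Ne.symm hne) (hsub (lexp_mem_invCone f'))

lemma HeadAutoreduced.exists_lexp_mem_invCone (A : SolvMul K n ord)
    (hauto : HeadAutoreduced ord L 𝓕) (h0 : (0 : SPoly K n) ∉ 𝓕) {g : SPoly K n}
    (hg : g ∈ invSpan A L 𝓕) (hg0 : g ≠ 0) : ∃ f ∈ 𝓕, lexp ord g ∈ invCone ord L 𝓕 f := by
  classical
  obtain ⟨P, hPmult, rfl⟩ := hg
  set T := 𝓕.attach.filter fun h => P h ≠ 0
  have hT : T.Nonempty := by
    rw [Finset.filter_nonempty_iff]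
    by_contra! hP
    exact hg0 (Finset.sum_eq_zero fun h hh => by rw [hP h hh, A.zero_star])
  let m (h : {h // h ∈ 𝓕}) : Fin n → ℕ := lexp ord (P h) + lexp ord h.1
  have hcone : ∀ h ∈ T, m h ∈ invCone ord L 𝓕 h.1 :=
    fun h hh => add_lexp_mem_invCone (Finset.mem_filter.mp hh).2 (hPmult h)
  obtain ⟨h₀, hh₀, hmax⟩ := @Finset.exists_max_image _ _ ord T m hT
  -- the cones of distinct elements being disjoint, only the summand `P h₀ ⋆ h₀` reaches `m h₀`
  have hlead : IsLeadExp ord (m h₀) (∑ h ∈ 𝓕.attach, A.star (P h) h.1) := by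
    refine IsLeadExp.sum (Finset.mem_attach _ h₀)
      (isLeadExp_star A (Finset.mem_filter.mp hh₀).2 (ne_of_mem_of_not_mem h₀.2 h0))
      fun h _ hne => ?_
    by_cases hP : P h = 0
    · simp [hP, A.zero_star]
    have hhT : h ∈ T := Finset.mem_filter.mpr ⟨Finset.mem_attach _ _, hP⟩
    refine (isLeadExp_star A hP (ne_of_mem_of_not_mem h.2 h0)).support_lt
      (@lt_of_le_of_ne _ ord.toPartialOrder _ _ (hmax h hhT) fun heq => hne (Subtype.ext ?_))
    exact hauto.eq_of_mem_invCone h.2 h₀.2 (hcone h hhT)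
      (by rw [show m h = m h₀ from heq]; exact hcone h₀ hh₀)
  exact ⟨h₀.1, h₀.2, hlead.lexp_eq ▸ hcone h₀ hh₀⟩

lemma HeadAutoreduced.eq_of_sub_mem_invSpan (A : SolvMul K n ord)
    (hauto : HeadAutoreduced ord L 𝓕) (h0 : (0 : SPoly K n) ∉ 𝓕) {g₁ g₂ : SPoly K n}
    (hsub : g₁ - g₂ ∈ invSpan A L 𝓕) (h₁ : InvIrreducible ord L 𝓕 g₁)
    (h₂ : InvIrreducible ord L 𝓕 g₂) : g₁ = g₂ := by
  by_contra hne
  have hsub0 : g₁ - g₂ ≠ 0 := sub_ne_zero.mpr hne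
  obtain ⟨f, hf, hcone⟩ := hauto.exists_lexp_mem_invCone A h0 hsub hsub0
  rcases Finset.mem_union.mp (support_sub (lexp_mem_support ord hsub0)) with h | h
  exacts [h₁ _ h f hf hcone, h₂ _ h f hf hcone]

end NormalForm

/-- If `𝓕` is a finite, involutively head autoreduced set of nonzero polynomials,
every polynomial `g` has a unique involutive normal form modulo `𝓕`; moreover `g`
lies in the involutive span of `𝓕` iff its involutive normal form is `0`. -/
theorem stmt17 {K : Type} [Field K] {n : ℕ} (ord : LinearOrder (Fin n → ℕ))
    (A : SolvMul K n ord) (L : InvDiv n) (𝓕 : Finset (SPoly K n))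
    (h0 : (0 : SPoly K n) ∉ 𝓕)
    (hauto : ∀ f ∈ 𝓕, ∀ f' ∈ 𝓕, f ≠ f' →
      lexp ord f ∉ rcone (L.mult (leadSet ord 𝓕) (lexp ord f')) (lexp ord f')) :
    (∀ g g₁ g₂ : SPoly K n, IsInvNF ord A L 𝓕 g g₁ → IsInvNF ord A L 𝓕 g g₂ →
      g₁ = g₂) ∧
    (∀ g g₁ : SPoly K n, IsInvNF ord A L 𝓕 g g₁ →
      (g ∈ PolyInvSpan ord A L 𝓕 ↔ g₁ = 0)) := by
  have hauto' : HeadAutoreduced ord L 𝓕 := hauto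
  refine ⟨fun g g₁ g₂ h₁ h₂ => ?_, fun g g₁ h₁ => ⟨fun hg => ?_, fun hg₁ => ?_⟩⟩
  · refine hauto'.eq_of_sub_mem_invSpan A h0 ?_ h₁.2 h₂.2
    simpa using sub_mem (sub_mem_invSpan_of_reflTransGen h₂.1)
      (sub_mem_invSpan_of_reflTransGen h₁.1)
  · refine hauto'.eq_of_sub_mem_invSpan A h0 ?_ h₁.2 (by simp [InvIrreducible])
    simpa using sub_mem (show g ∈ invSpan A L 𝓕 from hg) (sub_mem_invSpan_of_reflTransGen h₁.1)
  · have hspan := sub_mem_invSpan_of_reflTransGen h₁.1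
    rwa [hg₁, sub_zero] at hspan
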